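/- For every word A ∈ W_ω there exists a unique word B in normal form NF such that A ∼ B, and moreover |B| ≤ |A|. -/

import Mathlib

open scoped Classical

/-- Words: finite strings over the alphabet of natural numbers. -/
abbrev Word := List ℕ

/-- Lexicographic "not greater" comparison of finite sequences of words,
where entries are compared with the preorder `r`. -/
def LexLe (r : Word → Word → Prop) (xs ys : List Word) : Prop :=
  (xs.length ≤ ys.length ∧ ∀ i < xs.length,
      r (xs.getD i []) (ys.getD i []) ∧ r (ys.getD i []) (xs.getD i []))
  ∨ ∃ s, s < xs.length ∧ s < ys.length ∧
      (∀ i < s, r (xs.getD i []) (ys.getD i []) ∧ r (ys.getD i []) (xs.getD i [])) ∧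
      r (xs.getD s []) (ys.getD s []) ∧ ¬ r (ys.getD s []) (xs.getD s [])

/-- `M` is a lexicographically maximal subsequence of `xs` (w.r.t. entry preorder `r`). -/
def IsLexMax (r : Word → Word → Prop) (xs M : List Word) : Prop :=
  M.Sublist xs ∧ ∀ N : List Word, N.Sublist xs → LexLe r N M

/-- Fuelled version of the recursively defined preorder `≾` on words:
`Λ ≾ Λ`; and if `n` is the minimal symbol of `A ++ B`, split `A` and `B` into
blocks at `n` and compare the lexicographically maximal subsequences of blocks. -/
def leAux : ℕ → Word → Word → Prop
  | 0, A, B => A = [] ∧ B = []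
  | (fuel+1), A, B =>
      (A = [] ∧ B = []) ∨
      (∀ m, (A ++ B).min? = some m →
        ∀ MA MB : List Word, IsLexMax (leAux fuel) (A.splitOn m) MA →
          IsLexMax (leAux fuel) (B.splitOn m) MB →
          LexLe (leAux fuel) MA MB)

/-- The preorder `≾` on words (the fuel `|A|+|B|+1` suffices for the recursion). -/
def Wle (A B : Word) : Prop := leAux (A.length + B.length + 1) A B

/-- The equivalence `∼`: `A ≾ B` and `B ≾ A`. -/
def Wequiv (A B : Word) : Prop := Wle A B ∧ Wle B A

/-- The strict relation `≺`: `A ≾ B` and not `B ≾ A`. -/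
def Wlt (A B : Word) : Prop := Wle A B ∧ ¬ Wle B A

/-- Fuelled version of the normal form predicate `NF`. -/
def NFAux : ℕ → Word → Prop
  | 0, A => A = []
  | (fuel+1), A => A = [] ∨ ∀ m, A.min? = some m →
      (A.splitOn m).Chain' (fun x y => Wle y x) ∧ ∀ b ∈ A.splitOn m, NFAux fuel b

/-- `A` is in normal form. -/
def InNF (A : Word) : Prop := NFAux A.length A

/-- `◇ₖ A`: the normal form of the word `A` with symbol `k` appended. -/
noncomputable def diamond (k : ℕ) (A : Word) : Word :=
  if h : ∃ B, InNF B ∧ Wequiv B (A ++ [k]) then h.choose else []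

/-- Fuelled version of the ordinal value functions `o_n` on normal-form words in `S_n`. -/
noncomputable def oAux : ℕ → ℕ → Word → Ordinal
  | 0, _, _ => 0
  | (fuel+1), n, A =>
      if A.all (· = n) then (A.length : Ordinal)
      else ((A.splitOn n).map (fun b => Ordinal.omega0 ^ oAux fuel (n+1) b)).foldr (· + ·) 0

/-- The ordinal value function `o_n : NF ∩ S_n → Ordinals`. -/
noncomputable def oW (n : ℕ) (A : Word) : Ordinal :=
  oAux (A.foldr max 0 + A.length + 1) n A

/-- The towers of `ω`-exponentiations: `ω_0 = 1`, `ω_{n+1} = ω ^ ω_n`. -/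
noncomputable def omegaTower : ℕ → Ordinal
  | 0 => 1
  | (n+1) => Ordinal.omega0 ^ omegaTower n

/-- `ε₀`, the supremum of the `ω`-towers. -/
noncomputable def eps0 : Ordinal := ⨆ n : ℕ, omegaTower n

/-- The function `ψ` on ordinals: `ψ 0 = ω`, and for `α > 0` with Cantor normal form
`ω^{α_1}+⋯+ω^{α_n}` (non-increasing exponents), `ψ α = ω^{α_1}+⋯+ω^{α_{n-1}}+ω^{α_n+1}`. -/
noncomputable def psi (α : Ordinal) : Ordinal :=
  match (Ordinal.CNF Ordinal.omega0 α).getLast? with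
  | none => Ordinal.omega0
  | some p =>
      ((Ordinal.CNF Ordinal.omega0 α).dropLast).foldr
        (fun q r => Ordinal.omega0 ^ q.1 * q.2 + r) 0
      + (Ordinal.omega0 ^ p.1 * (p.2 - 1) + Ordinal.omega0 ^ (p.1 + 1))

/-- The standard fundamental sequences `α[n]` for limit ordinals below `ε₀`
(junk values elsewhere). -/
noncomputable def fundSeq (α : Ordinal) (n : ℕ) : Ordinal :=
  match (Ordinal.CNF Ordinal.omega0 α).getLast? with
  | none => 0
  | some p =>
    let pre := ((Ordinal.CNF Ordinal.omega0 α).dropLast).foldr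
        (fun q r => Ordinal.omega0 ^ q.1 * q.2 + r) 0
      + Ordinal.omega0 ^ p.1 * (p.2 - 1)
    if p.1 = 0 then 0
    else if h : ∃ e', p.1 = e' + 1 then
      pre + Ordinal.omega0 ^ h.choose * ((n : Ordinal) + 1)
    else if hlt : p.1 < α then pre + Ordinal.omega0 ^ (fundSeq p.1 n) else 0
termination_by α
decreasing_by exact hlt

/-- The relation `R`: `α R β` iff `β = α + 1`, or `β` is a limit and `α = β[n]` for some `n`. -/
def Rrel (α β : Ordinal) : Prop :=
  β = α + 1 ∨ (Order.IsSuccLimit β ∧ ∃ n : ℕ, α = fundSeq β n)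

/-! By induction on the alphabet, `≾` is a total preorder: on words whose least letter is at
least `m` it is the pullback, along splitting at `m`, of the lexicographic comparison of maximal
block subsequences, and that comparison is a total preorder as soon as `≾` is one on the blocks.
A lexicographically maximal subsequence `M` of the blocks of `A` is then non-increasing and
determines the class of `A`, so rejoining with `m` the normal forms of the blocks of `M` (by
induction on the length) gives a normal form of `A` no longer than `A`. Equivalent normal forms
have entrywise equivalent block sequences, which are equal by induction, so they coincide. -/

def listsOver {α : Type*} (s : Set α) : Set (List α) := {l | ∀ x ∈ l, x ∈ s}

section ListsOver

variable {α : Type*} {s : Set α} {a : α} {l l' : List α}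

lemma mem_listsOver_cons : a :: l ∈ listsOver s ↔ a ∈ s ∧ l ∈ listsOver s :=
  List.forall_mem_cons

lemma mem_listsOver_of_sublist (h : l'.Sublist l) (hl : l ∈ listsOver s) : l' ∈ listsOver s :=
  fun x hx => hl x (h.subset hx)

lemma mem_listsOver_toFinset [DecidableEq α] (h : l' ⊆ l) : l' ∈ listsOver (l.toFinset : Set α) :=
  fun _ hx => List.mem_toFinset.2 (h hx)

lemma mem_listsOver_univ (l : List α) : l ∈ listsOver (Set.univ : Set α) :=
  fun x _ => Set.mem_univ x

end ListsOver

structure IsTotalPreorderOn {α : Type*} (r : α → α → Prop) (s : Set α) : Prop where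
  total : ∀ x ∈ s, ∀ y ∈ s, r x y ∨ r y x
  trans : ∀ x ∈ s, ∀ y ∈ s, ∀ z ∈ s, r x y → r y z → r x z

namespace IsTotalPreorderOn

variable {α β : Type*} {r r' : α → α → Prop} {s : Set α}

lemma refl (h : IsTotalPreorderOn r s) {x : α} (hx : x ∈ s) : r x x :=
  (h.total x hx x hx).elim id id

lemma congr (h : IsTotalPreorderOn r s) (hr : ∀ x ∈ s, ∀ y ∈ s, r x y ↔ r' x y) :
    IsTotalPreorderOn r' s where
  total x hx y hy := (h.total x hx y hy).imp (hr x hx y hy).1 (hr y hy x hx).1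
  trans x hx y hy z hz hxy hyz :=
    (hr x hx z hz).1 (h.trans x hx y hy z hz ((hr x hx y hy).2 hxy) ((hr y hy z hz).2 hyz))

lemma comap (h : IsTotalPreorderOn r s) {t : Set β} {f : β → α} (hf : ∀ x ∈ t, f x ∈ s) :
    IsTotalPreorderOn (fun x y => r (f x) (f y)) t where
  total x hx y hy := h.total _ (hf x hx) _ (hf y hy)
  trans x hx y hy z hz := h.trans _ (hf x hx) _ (hf y hy) _ (hf z hz)

lemma exists_max (h : IsTotalPreorderOn r s) :
    ∀ {l : List α}, l ≠ [] → l ∈ listsOver s → ∃ m ∈ l, ∀ x ∈ l, r x m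
  | [a], _, hl => ⟨a, List.mem_singleton_self a, fun x hx => by
      rw [List.eq_of_mem_singleton hx]; exact h.refl (hl a (List.mem_singleton_self a))⟩
  | a :: b :: l, _, hl => by
    obtain ⟨ha, hl⟩ := mem_listsOver_cons.1 hl
    obtain ⟨m, hm, hmax⟩ := h.exists_max (List.cons_ne_nil b l) hl
    rcases h.total a ha m (hl m hm) with ham | hma
    · exact ⟨m, List.mem_cons_of_mem a hm, List.forall_mem_cons.2 ⟨ham, hmax⟩⟩
    · exact ⟨a, List.mem_cons_self, List.forall_mem_cons.2
        ⟨h.refl ha, fun x hx => h.trans x (hl x hx) m (hl m hm) a ha (hmax x hx) hma⟩⟩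

end IsTotalPreorderOn

section LexLe

variable {r r' : Word → Word → Prop} {S : Set Word} {x y : Word} {xs ys M N : List Word}

@[simp] lemma lexLe_nil_left (ys : List Word) : LexLe r [] ys :=
  Or.inl ⟨Nat.zero_le _, fun _ hi => absurd hi (Nat.not_lt_zero _)⟩

@[simp] lemma not_lexLe_cons_nil : ¬ LexLe r (x :: xs) [] := by
  rintro (⟨h, -⟩ | ⟨s, -, hs, -⟩)
  · simp at h
  · simp at hs

lemma lexLe_cons_cons :
    LexLe r (x :: xs) (y :: ys) ↔ (r x y ∧ ¬ r y x) ∨ (r x y ∧ r y x ∧ LexLe r xs ys) := by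
  simp only [LexLe, List.length_cons, Nat.add_le_add_iff_right]
  constructor
  · rintro (⟨hlen, h⟩ | ⟨s, hs₁, hs₂, hlt, hr, hnr⟩)
    · have h₀ := h 0 (Nat.succ_pos _)
      exact Or.inr ⟨h₀.1, h₀.2, Or.inl ⟨hlen, fun i hi => h (i + 1) (by omega)⟩⟩
    · cases s with
      | zero => exact Or.inl ⟨hr, hnr⟩
      | succ s =>
        have h₀ := hlt 0 (Nat.succ_pos _)
        exact Or.inr ⟨h₀.1, h₀.2,
          Or.inr ⟨s, by omega, by omega, fun i hi => hlt (i + 1) (by omega), hr, hnr⟩⟩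
  · rintro (⟨hr, hnr⟩ | ⟨hxy, hyx, ⟨hlen, h⟩ | ⟨s, hs₁, hs₂, hlt, hr, hnr⟩⟩)
    · exact Or.inr ⟨0, Nat.succ_pos _, Nat.succ_pos _,
        fun i hi => absurd hi (Nat.not_lt_zero _), hr, hnr⟩
    · refine Or.inl ⟨by omega, fun i hi => ?_⟩
      cases i with
      | zero => exact ⟨hxy, hyx⟩
      | succ i => exact h i (by omega)
    · refine Or.inr ⟨s + 1, by omega, by omega, fun i hi => ?_, hr, hnr⟩
      cases i with
      | zero => exact ⟨hxy, hyx⟩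
      | succ i => exact hlt i (by omega)

lemma rel_of_lexLe_cons_cons (h : LexLe r (x :: xs) (y :: ys)) : r x y :=
  (lexLe_cons_cons.1 h).elim And.left And.left

lemma lexLe_of_lexLe_cons_cons (h : LexLe r (x :: xs) (y :: ys)) (hyx : r y x) :
    LexLe r xs ys :=
  ((lexLe_cons_cons.1 h).resolve_left fun h => h.2 hyx).2.2

lemma lexLe_singleton_iff : LexLe r [x] [y] ↔ r x y := by
  refine ⟨rel_of_lexLe_cons_cons, fun hxy => lexLe_cons_cons.2 ?_⟩
  by_cases hyx : r y x
  exacts [Or.inr ⟨hxy, hyx, lexLe_nil_left _⟩, Or.inl ⟨hxy, hyx⟩]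

lemma lexLe_congr (hr : ∀ x ∈ S, ∀ y ∈ S, r x y ↔ r' x y) :
    ∀ {xs ys : List Word}, xs ∈ listsOver S → ys ∈ listsOver S →
      (LexLe r xs ys ↔ LexLe r' xs ys)
  | [], _, _, _ => by simp
  | _ :: _, [], _, _ => by simp
  | x :: xs, y :: ys, hxs, hys => by
    rw [mem_listsOver_cons] at hxs hys
    rw [lexLe_cons_cons, lexLe_cons_cons, hr x hxs.1 y hys.1, hr y hys.1 x hxs.1,
      lexLe_congr hr hxs.2 hys.2]

lemma lexLe_total (h : IsTotalPreorderOn r S) :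
    ∀ {xs ys : List Word}, xs ∈ listsOver S → ys ∈ listsOver S → LexLe r xs ys ∨ LexLe r ys xs
  | [], _, _, _ => Or.inl (lexLe_nil_left _)
  | _ :: _, [], _, _ => Or.inr (lexLe_nil_left _)
  | x :: xs, y :: ys, hxs, hys => by
    rw [mem_listsOver_cons] at hxs hys
    rw [lexLe_cons_cons, lexLe_cons_cons]
    have := h.total x hxs.1 y hys.1
    have := lexLe_total h hxs.2 hys.2
    tauto

lemma lexLe_trans (h : IsTotalPreorderOn r S) :
    ∀ {xs ys zs : List Word}, xs ∈ listsOver S → ys ∈ listsOver S → zs ∈ listsOver S →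
      LexLe r xs ys → LexLe r ys zs → LexLe r xs zs
  | [], _, _, _, _, _, _, _ => lexLe_nil_left _
  | _ :: _, [], _, _, _, _, h₁, _ => absurd h₁ not_lexLe_cons_nil
  | _ :: _, _ :: _, [], _, _, _, _, h₂ => absurd h₂ not_lexLe_cons_nil
  | x :: xs, y :: ys, z :: zs, hxs, hys, hzs, h₁, h₂ => by
    rw [mem_listsOver_cons] at hxs hys hzs
    have hxy := rel_of_lexLe_cons_cons h₁
    have hyz := rel_of_lexLe_cons_cons h₂
    have hxz := h.trans x hxs.1 y hys.1 z hzs.1 hxy hyz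
    rw [lexLe_cons_cons]
    by_cases hzx : r z x
    · have hyx := h.trans y hys.1 z hzs.1 x hxs.1 hyz hzx
      have hzy := h.trans z hzs.1 x hxs.1 y hys.1 hzx hxy
      exact Or.inr ⟨hxz, hzx, lexLe_trans h hxs.2 hys.2 hzs.2
        (lexLe_of_lexLe_cons_cons h₁ hyx) (lexLe_of_lexLe_cons_cons h₂ hzy)⟩
    · exact Or.inl ⟨hxz, hzx⟩

lemma IsTotalPreorderOn.lexLe (h : IsTotalPreorderOn r S) :
    IsTotalPreorderOn (LexLe r) (listsOver S) where
  total _ hxs _ hys := lexLe_total h hxs hys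
  trans _ hxs _ hys _ hzs := lexLe_trans h hxs hys hzs

lemma forall₂_of_lexLe_of_lexLe :
    ∀ {xs ys : List Word}, LexLe r xs ys → LexLe r ys xs →
      List.Forall₂ (fun x y => r x y ∧ r y x) xs ys
  | [], [], _, _ => .nil
  | [], _ :: _, _, h => absurd h not_lexLe_cons_nil
  | _ :: _, [], h, _ => absurd h not_lexLe_cons_nil
  | x :: xs, y :: ys, h₁, h₂ => by
    have hxy := rel_of_lexLe_cons_cons h₁
    have hyx := rel_of_lexLe_cons_cons h₂
    exact .cons ⟨hxy, hyx⟩ (forall₂_of_lexLe_of_lexLe (lexLe_of_lexLe_cons_cons h₁ hyx)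
      (lexLe_of_lexLe_cons_cons h₂ hxy))

lemma lexLe_of_forall₂ (h : List.Forall₂ (fun x y => r x y ∧ r y x) xs ys) : LexLe r xs ys := by
  induction h with
  | nil => exact lexLe_nil_left _
  | cons hxy _ ih => exact lexLe_cons_cons.2 (Or.inr ⟨hxy.1, hxy.2, ih⟩)

lemma isChain_of_forall_sublist_lexLe :
    ∀ {M : List Word}, (∀ x ∈ M, r x x) → (∀ N, N.Sublist M → LexLe r N M) →
      M.IsChain (fun x y => r y x)
  | [], _, _ => .nil
  | [a], _, _ => .singleton a
  | a :: b :: M, hrefl, hmax => by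
    refine List.isChain_cons_cons.2 ⟨rel_of_lexLe_cons_cons (hmax _ (List.sublist_cons_self a _)),
      isChain_of_forall_sublist_lexLe (fun x hx => hrefl x (List.mem_cons_of_mem a hx))
        fun N hN => ?_⟩
    exact lexLe_of_lexLe_cons_cons (hmax (a :: N) (hN.cons_cons a)) (hrefl a List.mem_cons_self)

lemma lexLe_cons_self_of_isChain :
    ∀ {a : Word} {xs : List Word}, (a :: xs).IsChain (fun x y => r y x) → LexLe r xs (a :: xs)
  | _, [], _ => lexLe_nil_left _
  | a, b :: xs, h => by
    rw [List.isChain_cons_cons] at h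
    rw [lexLe_cons_cons]
    by_cases hab : r a b
    · exact Or.inr ⟨h.1, hab, lexLe_cons_self_of_isChain h.2⟩
    · exact Or.inl ⟨h.1, hab⟩

lemma lexLe_of_sublist_of_isChain (h : IsTotalPreorderOn r S) (hM : M ∈ listsOver S)
    (hch : M.IsChain (fun x y => r y x)) (hN : N.Sublist M) : LexLe r N M := by
  induction hN with
  | slnil => exact lexLe_nil_left _
  | cons a hN ih =>
    have hM' := (mem_listsOver_cons.1 hM).2
    exact lexLe_trans h (mem_listsOver_of_sublist hN hM') hM' hM (ih hM' hch.tail)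
      (lexLe_cons_self_of_isChain hch)
  | cons_cons a hN ih =>
    obtain ⟨ha, hM'⟩ := mem_listsOver_cons.1 hM
    exact lexLe_cons_cons.2 (Or.inr ⟨h.refl ha, h.refl ha, ih hM' hch.tail⟩)

lemma IsLexMax.ne_nil (hM : IsLexMax r xs M) (hxs : xs ≠ []) : M ≠ [] := by
  obtain ⟨x, xs, rfl⟩ := List.exists_cons_of_ne_nil hxs
  rintro rfl
  exact not_lexLe_cons_nil (hM.2 [x] ((List.nil_sublist xs).cons_cons x))

lemma IsLexMax.mem_listsOver (hM : IsLexMax r xs M) (hxs : xs ∈ listsOver S) :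
    M ∈ listsOver S :=
  mem_listsOver_of_sublist hM.1 hxs

lemma IsLexMax.isChain (h : IsTotalPreorderOn r S) (hxs : xs ∈ listsOver S)
    (hM : IsLexMax r xs M) : M.IsChain (fun x y => r y x) :=
  isChain_of_forall_sublist_lexLe (fun x hx => h.refl (hxs x (hM.1.subset hx)))
    fun N hN => hM.2 N (hN.trans hM.1)

lemma isLexMax_self_of_isChain (h : IsTotalPreorderOn r S) (hM : M ∈ listsOver S)
    (hch : M.IsChain (fun x y => r y x)) : IsLexMax r M M :=
  ⟨List.Sublist.refl M, fun _ hN => lexLe_of_sublist_of_isChain h hM hch hN⟩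

lemma exists_isLexMax (h : IsTotalPreorderOn r S) (hxs : xs ∈ listsOver S) :
    ∃ M, IsLexMax r xs M := by
  obtain ⟨M, hM, hmax⟩ := h.lexLe.exists_max
    (List.ne_nil_of_mem (List.mem_sublists.2 (List.nil_sublist xs)))
    fun N hN => mem_listsOver_of_sublist (List.mem_sublists.1 hN) hxs
  exact ⟨M, List.mem_sublists.1 hM, fun N hN => hmax N (List.mem_sublists.2 hN)⟩

lemma isLexMax_congr (hr : ∀ x ∈ S, ∀ y ∈ S, r x y ↔ r' x y) (hxs : xs ∈ listsOver S) :
    IsLexMax r xs M ↔ IsLexMax r' xs M :=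
  and_congr_right fun hM => forall₂_congr fun _ hN =>
    lexLe_congr hr (mem_listsOver_of_sublist hN hxs) (mem_listsOver_of_sublist hM hxs)

lemma isLexMax_singleton_iff (hx : r x x) : IsLexMax r [x] M ↔ M = [x] := by
  constructor
  · rintro ⟨hM, hmax⟩
    rcases List.sublist_singleton.1 hM with rfl | rfl
    · exact absurd (hmax [x] (List.Sublist.refl _)) not_lexLe_cons_nil
    · rfl
  · rintro rfl
    refine ⟨List.Sublist.refl _, fun N hN => ?_⟩
    rcases List.sublist_singleton.1 hN with rfl | rfl
    · exact lexLe_nil_left _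
    · exact lexLe_singleton_iff.2 hx

end LexLe

/-- The comparison that `leAux` performs on the block sequences of two words. -/
def LexMaxLe (r : Word → Word → Prop) (xs ys : List Word) : Prop :=
  ∀ MA MB, IsLexMax r xs MA → IsLexMax r ys MB → LexLe r MA MB

section LexMaxLe

variable {r r' : Word → Word → Prop} {S : Set Word} {x y : Word} {xs ys MA MB : List Word}

lemma lexMaxLe_congr (hr : ∀ x ∈ S, ∀ y ∈ S, r x y ↔ r' x y) (hxs : xs ∈ listsOver S)
    (hys : ys ∈ listsOver S) : LexMaxLe r xs ys ↔ LexMaxLe r' xs ys := by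
  refine forall₂_congr fun MA MB => ?_
  rw [isLexMax_congr hr hxs, isLexMax_congr hr hys]
  exact imp_congr_right fun hMA => imp_congr_right fun hMB =>
    lexLe_congr hr (hMA.mem_listsOver hxs) (hMB.mem_listsOver hys)

lemma lexMaxLe_iff (h : IsTotalPreorderOn r S) (hxs : xs ∈ listsOver S) (hys : ys ∈ listsOver S)
    (hMA : IsLexMax r xs MA) (hMB : IsLexMax r ys MB) : LexMaxLe r xs ys ↔ LexLe r MA MB := by
  refine ⟨fun hle => hle MA MB hMA hMB, fun hle MA' MB' hMA' hMB' => ?_⟩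
  have hA' := hMA'.mem_listsOver hxs
  have hB := hMB.mem_listsOver hys
  exact lexLe_trans h hA' hB (hMB'.mem_listsOver hys)
    (lexLe_trans h hA' (hMA.mem_listsOver hxs) hB (hMA.2 MA' hMA'.1) hle) (hMB'.2 MB hMB.1)

lemma IsTotalPreorderOn.lexMaxLe (h : IsTotalPreorderOn r S) :
    IsTotalPreorderOn (LexMaxLe r) (listsOver S) where
  total xs hxs ys hys := by
    obtain ⟨MA, hMA⟩ := exists_isLexMax h hxs
    obtain ⟨MB, hMB⟩ := exists_isLexMax h hys
    rw [lexMaxLe_iff h hxs hys hMA hMB, lexMaxLe_iff h hys hxs hMB hMA]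
    exact lexLe_total h (hMA.mem_listsOver hxs) (hMB.mem_listsOver hys)
  trans xs hxs ys hys zs hzs := by
    obtain ⟨MA, hMA⟩ := exists_isLexMax h hxs
    obtain ⟨MB, hMB⟩ := exists_isLexMax h hys
    obtain ⟨MC, hMC⟩ := exists_isLexMax h hzs
    rw [lexMaxLe_iff h hxs hys hMA hMB, lexMaxLe_iff h hys hzs hMB hMC,
      lexMaxLe_iff h hxs hzs hMA hMC]
    exact lexLe_trans h (hMA.mem_listsOver hxs) (hMB.mem_listsOver hys) (hMC.mem_listsOver hzs)

lemma lexMaxLe_singleton_iff (hx : r x x) (hy : r y y) : LexMaxLe r [x] [y] ↔ r x y := by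
  refine ⟨fun h => lexLe_singleton_iff.1 (h [x] [y] ((isLexMax_singleton_iff hx).2 rfl)
    ((isLexMax_singleton_iff hy).2 rfl)), fun hxy MA MB hMA hMB => ?_⟩
  rw [(isLexMax_singleton_iff hx).1 hMA, (isLexMax_singleton_iff hy).1 hMB]
  exact lexLe_singleton_iff.2 hxy

end LexMaxLe

lemma eq_of_forall₂ {α : Type*} {R : α → α → Prop} {l l' : List α} (h : List.Forall₂ R l l')
    (hR : ∀ a ∈ l, ∀ b ∈ l', R a b → a = b) : l = l' := by
  induction h with
  | nil => rfl
  | cons hab _ ih =>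
    rw [hR _ List.mem_cons_self _ List.mem_cons_self hab,
      ih fun a ha b hb => hR a (List.mem_cons_of_mem _ ha) b (List.mem_cons_of_mem _ hb)]

lemma exists_mem_forall_le {α : Type*} [LinearOrder α] {A : List α} (hA : A ≠ []) :
    ∃ m ∈ A, ∀ a ∈ A, m ≤ a := by
  obtain ⟨m, hm⟩ := Option.isSome_iff_exists.1 (List.isSome_min?_of_ne_nil hA)
  exact ⟨m, List.min?_eq_some_iff.1 hm⟩

section SplitOn

variable {α : Type*}

lemma length_intercalate_singleton (m : α) {L : List (List α)} (hL : L ≠ []) :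
    ([m].intercalate L).length + 1 = (L.map List.length).sum + L.length := by
  induction L with
  | nil => exact absurd rfl hL
  | cons c L ih =>
    cases L with
    | nil => simp
    | cons d L => simp at ih ⊢; omega

lemma mem_intercalate_singleton {m x : α} {L : List (List α)} (hx : x ∈ [m].intercalate L) :
    x = m ∨ ∃ c ∈ L, x ∈ c := by
  induction L with
  | nil => simp at hx
  | cons c L ih =>
    cases L with
    | nil => exact Or.inr ⟨c, List.mem_singleton_self c, by simpa using hx⟩
    | cons d L =>
      rw [List.intercalate_cons_cons, List.mem_append, List.mem_append, List.mem_singleton] at hx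
      rcases hx with (hx | hx) | hx
      · exact Or.inr ⟨c, List.mem_cons_self, hx⟩
      · exact Or.inl hx
      · exact (ih hx).imp_right fun ⟨e, he, hxe⟩ => ⟨e, List.mem_cons_of_mem c he, hxe⟩

variable [BEq α] [LawfulBEq α] {A b : List α} {m x : α}

lemma mem_and_ne_of_mem_splitOn (hb : b ∈ A.splitOn m) (hx : x ∈ b) : x ∈ A ∧ x ≠ m := by
  induction A generalizing b with
  | nil => simp_all
  | cons a A ih =>
    obtain ⟨c, cs, hc⟩ := List.exists_cons_of_ne_nil (List.splitOn_ne_nil m A)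
    rw [List.splitOn_cons_eq_if_modifyHead, hc] at hb
    rw [hc] at ih
    have ih' : ∀ b ∈ c :: cs, x ∈ b → x ∈ a :: A ∧ x ≠ m :=
      fun b hb hx => (ih hb hx).imp (List.mem_cons_of_mem a) id
    split at hb
    · rcases List.mem_cons.1 hb with rfl | hb
      · simp at hx
      · exact ih' b hb hx
    · rename_i ha
      rcases List.mem_cons.1 hb with rfl | hb
      · rcases List.mem_cons.1 hx with rfl | hx
        · exact ⟨List.mem_cons_self, by simpa using ha⟩
        · exact ih' c List.mem_cons_self hx
      · exact ih' b (List.mem_cons_of_mem c hb) hx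

lemma length_splitOn (A : List α) (m : α) : (A.splitOn m).length = A.count m + 1 := by
  induction A with
  | nil => simp
  | cons a A ih =>
    rw [List.splitOn_cons_eq_if_modifyHead]
    split <;> simp_all

lemma length_add_one_eq_sum_splitOn (A : List α) (m : α) :
    A.length + 1 = ((A.splitOn m).map List.length).sum + (A.splitOn m).length := by
  conv_lhs => rw [← List.intercalate_splitOn (xs := A) m]
  exact length_intercalate_singleton m (List.splitOn_ne_nil m A)

lemma length_lt_of_mem_splitOn (hm : m ∈ A) (hb : b ∈ A.splitOn m) : b.length < A.length := by
  have hsum := length_add_one_eq_sum_splitOn A m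
  have hb' : b.length ≤ ((A.splitOn m).map List.length).sum :=
    List.le_sum_of_mem (List.mem_map_of_mem hb)
  have hcount := List.count_pos_iff.2 hm
  rw [length_splitOn] at hsum
  omega

lemma length_intercalate_map_le {M : List (List α)} {f : List α → List α}
    (hM : M.Sublist (A.splitOn m)) (hMne : M ≠ []) (hf : ∀ b ∈ M, (f b).length ≤ b.length) :
    ([m].intercalate (M.map f)).length ≤ A.length := by
  have hB := length_intercalate_singleton m (L := M.map f) (List.map_eq_nil_iff.not.2 hMne)
  have hA := length_add_one_eq_sum_splitOn A m
  have hf : ((M.map f).map List.length).sum ≤ (M.map List.length).sum := by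
    rw [List.map_map]
    exact List.sum_le_sum hf
  have hMA := (hM.map List.length).sum_le_sum fun _ _ => Nat.zero_le _
  have hlen := hM.length_le
  rw [List.length_map] at hB
  omega

lemma splitOn_intercalate_map {M : List (List α)} {f : List α → List α}
    (hM : M ⊆ A.splitOn m) (hMne : M ≠ []) (hf : ∀ b ∈ M, f b ⊆ b) :
    ([m].intercalate (M.map f)).splitOn m = M.map f := by
  refine List.splitOn_intercalate m ?_ (List.map_eq_nil_iff.not.2 hMne)
  simp only [List.mem_map, forall_exists_index, and_imp, forall_apply_eq_imp_iff₂]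
  exact fun b hb hmb => (mem_and_ne_of_mem_splitOn (hM hb) (hf b hb hmb)).2 rfl

lemma intercalate_map_subset {M : List (List α)} {f : List α → List α} (hmA : m ∈ A)
    (hM : M ⊆ A.splitOn m) (hf : ∀ b ∈ M, f b ⊆ b) : [m].intercalate (M.map f) ⊆ A :=
  fun x hx => (mem_intercalate_singleton hx).elim (· ▸ hmA) fun ⟨c, hc, hxc⟩ => by
    obtain ⟨b, hb, rfl⟩ := List.mem_map.1 hc
    exact (mem_and_ne_of_mem_splitOn (hM hb) (hf b hb hxc)).1

end SplitOn

lemma splitOn_mem_listsOver_erase {A : Word} {m : ℕ} {T : Finset ℕ}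
    (hA : A ∈ listsOver (T : Set ℕ)) :
    A.splitOn m ∈ listsOver (listsOver ((T.erase m : Finset ℕ) : Set ℕ)) := fun _ hb x hx =>
  have hx := mem_and_ne_of_mem_splitOn hb hx
  Finset.mem_erase.2 ⟨hx.2, hA x hx.1⟩

section Wle

-- Each level of the recursion removes a letter, so fuel beyond the size of the alphabet is idle.
lemma leAux_congr : ∀ {f g : ℕ} {T : Finset ℕ} {A B : Word}, T.card < f → T.card < g →
    A ∈ listsOver (T : Set ℕ) → B ∈ listsOver (T : Set ℕ) → (leAux f A B ↔ leAux g A B)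
  | 0, _, _, _, _, hf, _, _, _ => absurd hf (Nat.not_lt_zero _)
  | _, 0, _, _, _, _, hg, _, _ => absurd hg (Nat.not_lt_zero _)
  | f + 1, g + 1, T, A, B, hf, hg, hA, hB => by
    refine or_congr_right <| forall_congr' fun m => imp_congr_right fun hm => ?_
    have hmT : m ∈ T := by
      rcases List.mem_append.1 (List.min?_mem hm) with h | h
      exacts [hA m h, hB m h]
    have hcard := Finset.card_erase_add_one hmT
    exact lexMaxLe_congr (fun x hx y hy => leAux_congr (by omega) (by omega) hx hy)
      (splitOn_mem_listsOver_erase hA) (splitOn_mem_listsOver_erase hB)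

lemma leAux_iff_wle {f : ℕ} {A B : Word} (hf : (A ++ B).toFinset.card < f) :
    leAux f A B ↔ Wle A B := by
  have hlen := (A ++ B).toFinset_card_le
  rw [List.length_append] at hlen
  exact leAux_congr hf (by omega) (mem_listsOver_toFinset (List.subset_append_left A B))
    (mem_listsOver_toFinset (List.subset_append_right A B))

lemma wle_refl (A : Word) : Wle A A :=
  Or.inr fun _ _ MA _ hMA hMB => hMB.2 MA hMA.1

lemma wle_iff (A B : Word) : Wle A B ↔ (A = [] ∧ B = []) ∨
    ∀ m, (A ++ B).min? = some m → LexMaxLe Wle (A.splitOn m) (B.splitOn m) := by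
  refine or_congr_right <| forall_congr' fun m => imp_congr_right fun hm => ?_
  have hT : ((A ++ B).toFinset.erase m).card < A.length + B.length := by
    have := Finset.card_erase_add_one (List.mem_toFinset.2 (List.min?_mem hm))
    have := (A ++ B).toFinset_card_le
    rw [List.length_append] at this
    omega
  refine lexMaxLe_congr (fun x hx y hy => leAux_iff_wle ?_)
    (splitOn_mem_listsOver_erase (mem_listsOver_toFinset (List.subset_append_left A B)))
    (splitOn_mem_listsOver_erase (mem_listsOver_toFinset (List.subset_append_right A B)))
  refine lt_of_le_of_lt (Finset.card_le_card fun a ha => ?_) hT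
  rcases List.mem_append.1 (List.mem_toFinset.1 ha) with h | h
  exacts [hx a h, hy a h]

lemma wle_iff_lexMaxLe {A B : Word} {m : ℕ} (hm : ∀ a ∈ A ++ B, m ≤ a) :
    Wle A B ↔ LexMaxLe Wle (A.splitOn m) (B.splitOn m) := by
  by_cases hmem : m ∈ A ++ B
  · have hmin : (A ++ B).min? = some m := List.min?_eq_some_iff.2 ⟨hmem, hm⟩
    rw [wle_iff]
    constructor
    · rintro (⟨rfl, rfl⟩ | h)
      · simp at hmem
      · exact h m hmin
    · exact fun h => Or.inr fun m' hm' => Option.some_injective _ (hmin.symm.trans hm') ▸ h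
  · rw [List.mem_append, not_or] at hmem
    rw [List.splitOn_eq_singleton hmem.1, List.splitOn_eq_singleton hmem.2,
      lexMaxLe_singleton_iff (wle_refl A) (wle_refl B)]

theorem isTotalPreorderOn_wle (T : Finset ℕ) : IsTotalPreorderOn Wle (listsOver (T : Set ℕ)) := by
  induction T using Finset.strongInduction with
  | H T ih =>
    rcases T.eq_empty_or_nonempty with rfl | hT
    · have hnil : ∀ A ∈ listsOver ((∅ : Finset ℕ) : Set ℕ), A = [] := fun A hA =>
        List.eq_nil_iff_forall_not_mem.2 fun x hx => by simpa using hA x hx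
      exact ⟨fun A hA B hB => by rw [hnil A hA, hnil B hB]; exact Or.inl (wle_refl _),
        fun A hA _ _ C hC _ _ => by rw [hnil A hA, hnil C hC]; exact wle_refl _⟩
    · have hmin : ∀ A ∈ listsOver (T : Set ℕ), ∀ B ∈ listsOver (T : Set ℕ),
          ∀ a ∈ A ++ B, T.min' hT ≤ a := fun A hA B hB a ha =>
        T.min'_le a ((List.mem_append.1 ha).elim (hA a) (hB a))
      exact ((ih _ (T.erase_ssubset (T.min'_mem hT))).lexMaxLe.comap
        fun A hA => splitOn_mem_listsOver_erase hA).congr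
        fun A hA B hB => (wle_iff_lexMaxLe (hmin A hA B hB)).symm

theorem isTotalPreorderOn_wle_univ : IsTotalPreorderOn Wle Set.univ where
  total A _ B _ := (isTotalPreorderOn_wle (A ++ B).toFinset).total
    A (mem_listsOver_toFinset (by simp)) B (mem_listsOver_toFinset (by simp))
  trans A _ B _ C _ := (isTotalPreorderOn_wle (A ++ B ++ C).toFinset).trans
    A (mem_listsOver_toFinset (by simp)) B (mem_listsOver_toFinset (by simp))
    C (mem_listsOver_toFinset (by simp))

lemma wle_trans {A B C : Word} : Wle A B → Wle B C → Wle A C :=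
  isTotalPreorderOn_wle_univ.trans A trivial B trivial C trivial

lemma Wequiv.symm {A B : Word} (h : Wequiv A B) : Wequiv B A := ⟨h.2, h.1⟩

lemma Wequiv.trans {A B C : Word} (h₁ : Wequiv A B) (h₂ : Wequiv B C) : Wequiv A C :=
  ⟨wle_trans h₁.1 h₂.1, wle_trans h₂.2 h₁.2⟩

lemma wle_iff_lexLe {A B : Word} {m : ℕ} {MA MB : List Word} (hm : ∀ a ∈ A ++ B, m ≤ a)
    (hMA : IsLexMax Wle (A.splitOn m) MA) (hMB : IsLexMax Wle (B.splitOn m) MB) :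
    Wle A B ↔ LexLe Wle MA MB :=
  (wle_iff_lexMaxLe hm).trans (lexMaxLe_iff isTotalPreorderOn_wle_univ
    (mem_listsOver_univ _) (mem_listsOver_univ _) hMA hMB)

end Wle

section NormalForm

lemma nfAux_nil : ∀ f, NFAux f []
  | 0 => rfl
  | _ + 1 => Or.inl rfl

lemma nfAux_congr : ∀ {f g : ℕ} {A : Word}, A.length ≤ f → A.length ≤ g →
    (NFAux f A ↔ NFAux g A)
  | _, _, [], _, _ => iff_of_true (nfAux_nil _) (nfAux_nil _)
  | 0, _, _ :: _, hf, _ => absurd hf (by simp)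
  | _, 0, _ :: _, _, hg => absurd hg (by simp)
  | f + 1, g + 1, a :: A, hf, hg => by
    refine or_congr_right <| forall_congr' fun m => imp_congr_right fun hm =>
      and_congr_right fun _ => forall₂_congr fun b hb => ?_
    have := length_lt_of_mem_splitOn (List.min?_mem hm) hb
    exact nfAux_congr (by simp at hf this; omega) (by simp at hg this; omega)

lemma inNF_nil : InNF [] := nfAux_nil 0

lemma inNF_iff_splitOn {A : Word} {m : ℕ} (hm : ∀ a ∈ A, m ≤ a) :
    InNF A ↔ (A.splitOn m).IsChain (fun x y => Wle y x) ∧ ∀ b ∈ A.splitOn m, InNF b := by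
  by_cases hmA : m ∈ A
  · obtain ⟨a, A', rfl⟩ := List.exists_cons_of_ne_nil (List.ne_nil_of_mem hmA)
    have hmin : (a :: A').min? = some m := List.min?_eq_some_iff.2 ⟨hmA, hm⟩
    change (_ ∨ _) ↔ _
    simp only [reduceCtorEq, false_or, hmin, Option.some.injEq, forall_eq']
    refine and_congr_right fun _ => forall₂_congr fun b hb => nfAux_congr ?_ le_rfl
    have := length_lt_of_mem_splitOn hmA hb
    simp at this
    omega
  · simp [List.splitOn_eq_singleton hmA]

lemma inNF_wequiv_intercalate_map {A : Word} {m : ℕ} {M : List Word} {f : Word → Word}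
    (hmA : m ∈ A) (hm : ∀ a ∈ A, m ≤ a) (hM : IsLexMax Wle (A.splitOn m) M)
    (hf : ∀ b ∈ M, InNF (f b) ∧ Wequiv b (f b) ∧ (f b).length ≤ b.length ∧ f b ⊆ b) :
    InNF ([m].intercalate (M.map f)) ∧ Wequiv A ([m].intercalate (M.map f)) ∧
      ([m].intercalate (M.map f)).length ≤ A.length ∧ [m].intercalate (M.map f) ⊆ A := by
  set B := [m].intercalate (M.map f)
  have hMne : M ≠ [] := hM.ne_nil (List.splitOn_ne_nil m A)
  have hsub : ∀ b ∈ M, f b ⊆ b := fun b hb => (hf b hb).2.2.2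
  have hsplit : B.splitOn m = M.map f := splitOn_intercalate_map hM.1.subset hMne hsub
  have hBA : B ⊆ A := intercalate_map_subset hmA hM.1.subset hsub
  have hch : (M.map f).IsChain (fun x y => Wle y x) := by
    refine (List.isChain_map f).2 ((hM.isChain isTotalPreorderOn_wle_univ
      (mem_listsOver_univ _)).imp_of_mem_imp fun a b ha hb hba => ?_)
    exact wle_trans (hf b hb).2.1.2 (wle_trans hba (hf a ha).2.1.1)
  have hmB : ∀ a ∈ B, m ≤ a := fun a ha => hm a (hBA ha)
  have hmAB : ∀ a ∈ A ++ B, m ≤ a := fun a ha => (List.mem_append.1 ha).elim (hm a) (hmB a)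
  have hmBA : ∀ a ∈ B ++ A, m ≤ a := fun a ha => (List.mem_append.1 ha).elim (hmB a) (hm a)
  have hMB : IsLexMax Wle (B.splitOn m) (M.map f) := by
    rw [hsplit]
    exact isLexMax_self_of_isChain isTotalPreorderOn_wle_univ (mem_listsOver_univ _) hch
  have hequiv : ∀ b ∈ M, Wle b (f b) ∧ Wle (f b) b := fun b hb => (hf b hb).2.1
  refine ⟨(inNF_iff_splitOn hmB).2 ⟨hsplit ▸ hch, hsplit ▸ ?_⟩, ⟨?_, ?_⟩,
    length_intercalate_map_le hM.1 hMne fun b hb => (hf b hb).2.2.1, hBA⟩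
  · simpa using fun b hb => (hf b hb).1
  · refine (wle_iff_lexLe hmAB hM hMB).2 (lexLe_of_forall₂ ?_)
    exact List.forall₂_map_right_iff.2 (List.forall₂_same.2 hequiv)
  · refine (wle_iff_lexLe hmBA hMB hM).2 (lexLe_of_forall₂ ?_)
    exact List.forall₂_map_left_iff.2 (List.forall₂_same.2 fun b hb => (hequiv b hb).symm)

theorem exists_inNF_wequiv (A : Word) :
    ∃ B, InNF B ∧ Wequiv A B ∧ B.length ≤ A.length ∧ B ⊆ A := by
  induction hn : A.length using Nat.strong_induction_on generalizing A with
  | _ n ih =>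
    subst hn
    rcases eq_or_ne A [] with rfl | hA
    · exact ⟨[], inNF_nil, ⟨wle_refl _, wle_refl _⟩, le_rfl, List.Subset.refl _⟩
    obtain ⟨m, hmA, hm⟩ := exists_mem_forall_le hA
    choose! f hf using fun b hb => ih _ (length_lt_of_mem_splitOn hmA hb) b rfl
    obtain ⟨M, hM⟩ := exists_isLexMax isTotalPreorderOn_wle_univ (mem_listsOver_univ (A.splitOn m))
    exact ⟨_, inNF_wequiv_intercalate_map hmA hm hM fun b hb => hf b (hM.1.subset hb)⟩

theorem eq_of_inNF_of_wequiv {B B' : Word} (hB : InNF B) (hB' : InNF B') (h : Wequiv B B') :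
    B = B' := by
  induction hn : B.length using Nat.strong_induction_on generalizing B B' with
  | _ n ih =>
    subst hn
    rcases eq_or_ne (B ++ B') [] with hnil | hne
    · obtain ⟨rfl, rfl⟩ := List.append_eq_nil_iff.1 hnil
      rfl
    obtain ⟨m, hmem, hm⟩ := exists_mem_forall_le hne
    have hmB : ∀ a ∈ B, m ≤ a := fun a ha => hm a (List.mem_append_left B' ha)
    have hmB' : ∀ a ∈ B', m ≤ a := fun a ha => hm a (List.mem_append_right B ha)
    have hm' : ∀ a ∈ B' ++ B, m ≤ a := fun a ha => (List.mem_append.1 ha).elim (hmB' a) (hmB a)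
    obtain ⟨hch, hnf⟩ := (inNF_iff_splitOn hmB).1 hB
    obtain ⟨hch', hnf'⟩ := (inNF_iff_splitOn hmB').1 hB'
    have hM := isLexMax_self_of_isChain isTotalPreorderOn_wle_univ (mem_listsOver_univ _) hch
    have hM' := isLexMax_self_of_isChain isTotalPreorderOn_wle_univ (mem_listsOver_univ _) hch'
    have hσ := forall₂_of_lexLe_of_lexLe ((wle_iff_lexLe hm hM hM').1 h.1)
      ((wle_iff_lexLe hm' hM' hM).1 h.2)
    have hmemB : m ∈ B := by
      have hcount := hσ.length_eq
      rw [length_splitOn, length_splitOn] at hcount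
      rcases List.mem_append.1 hmem with hmB | hmB'
      · exact hmB
      · rw [← List.count_pos_iff] at hmB' ⊢
        omega
    have hsplit : B.splitOn m = B'.splitOn m := eq_of_forall₂ hσ fun b hb b' hb' hbb' =>
      ih _ (length_lt_of_mem_splitOn hmemB hb) (hnf b hb) (hnf' b' hb') hbb' rfl
    rw [← List.intercalate_splitOn (xs := B) m, hsplit, List.intercalate_splitOn]

end NormalForm

theorem exists_unique_normal_form (A : Word) :
    (∃! B : Word, InNF B ∧ Wequiv A B) ∧
    ∀ B : Word, InNF B → Wequiv A B → B.length ≤ A.length := by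
  obtain ⟨B₀, hB₀, hAB₀, hlen, -⟩ := exists_inNF_wequiv A
  have huniq : ∀ B, InNF B → Wequiv A B → B = B₀ := fun B hB hAB =>
    eq_of_inNF_of_wequiv hB hB₀ (hAB.symm.trans hAB₀)
  exact ⟨⟨B₀, ⟨hB₀, hAB₀⟩, fun B hB => huniq B hB.1 hB.2⟩,
    fun B hB hAB => huniq B hB hAB ▸ hlen⟩
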